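/- arXiv:0802.1996 — 2 statements merged into one kernel-verified Lean document; each statement's English description precedes it below -/
import Mathlib

section
/- Let a > 0 and let G : ℝ → ℝ³ be a smooth solution of the ODE (1/2)G(x) − (x/2)G'(x) = G'(x) ∧ G''(x). Then χ(t,x) := √t · G(x/√t), defined for t > 0, satisfies χ_t = χ_x ∧ χ_xx. -/
open Matrix

/-- the self-similar profile generates a solution of the
binormal flow for positive times. -/
theorem selfsimilar_profile_gives_binormal_solution
    (a : ℝ) (ha : 0 < a) (G : ℝ → Fin 3 → ℝ)
    (hG : ContDiff ℝ (⊤ : ℕ∞) G)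
    (hODE : ∀ x : ℝ,
      (1 / 2 : ℝ) • G x - (x / 2) • deriv G x =
        crossProduct (deriv G x) (deriv (deriv G) x))
    (χ : ℝ → ℝ → Fin 3 → ℝ)
    (hχ : ∀ t x : ℝ, χ t x = Real.sqrt t • G (x / Real.sqrt t)) :
    ∀ t : ℝ, 0 < t → ∀ x : ℝ,
      deriv (fun s => χ s x) t =
        crossProduct (deriv (fun y => χ t y) x)
          (deriv (fun y => deriv (fun z => χ t z) y) x) := by
  have hGd : Differentiable ℝ G := hG.differentiable (by simp)
  have hG'd : Differentiable ℝ (deriv G) :=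
    (contDiff_infty_iff_deriv.mp (hG.of_le (by simp))).2.differentiable (by simp)
  intro t ht x
  set s := Real.sqrt t with hs_def
  have hs : 0 < s := Real.sqrt_pos.mpr ht
  have hs2 : s * s = t := Real.mul_self_sqrt ht.le
  -- first space derivative
  have hsp : ∀ y : ℝ, HasDerivAt (fun z => Real.sqrt t • G (z / Real.sqrt t))
      (deriv G (y / s)) y := by
    intro y
    have h1 : HasDerivAt (fun z : ℝ => G (z / s)) ((1 / s) • deriv G (y / s)) y :=
      ((hGd (y / s)).hasDerivAt).scomp y ((hasDerivAt_id y).div_const s)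
    have h2 : HasDerivAt (fun z => s • G (z / s)) (s • (1 / s) • deriv G (y / s)) y := h1.const_smul s
    rw [← hs_def]
    convert h2 using 1
    rw [smul_smul, mul_one_div, div_self hs.ne', one_smul]
  -- second space derivative
  have hsp2 : HasDerivAt (fun y => deriv G (y / s)) ((1 / s) • deriv (deriv G) (x / s)) x :=
    by have := ((hG'd (x / s)).hasDerivAt).scomp x ((hasDerivAt_id x).div_const s); exact this
  -- time derivative
  have h_sqrt : HasDerivAt Real.sqrt (1 / (2 * s)) t := Real.hasDerivAt_sqrt ht.ne'
  have h_inner : HasDerivAt (fun r => x / Real.sqrt r)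
      ((0 * s - x * (1 / (2 * s))) / s ^ 2) t :=
    (hasDerivAt_const t x).div h_sqrt hs.ne'
  have h_comp : HasDerivAt (fun r => G (x / Real.sqrt r))
      (((0 * s - x * (1 / (2 * s))) / s ^ 2) • deriv G (x / s)) t :=
    ((hGd (x / s)).hasDerivAt).scomp t h_inner
  have h_time : HasDerivAt (fun r => Real.sqrt r • G (x / Real.sqrt r)) _ t := h_sqrt.smul h_comp
  -- rewrite the goal
  simp only [hχ]
  rw [(hsp x).deriv]
  have hfun : (fun y => deriv (fun z => Real.sqrt t • G (z / Real.sqrt t)) y)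
      = fun y => deriv G (y / s) := funext fun y => (hsp y).deriv
  rw [hfun, hsp2.deriv, h_time.deriv]
  rw [_root_.map_smul]
  rw [← hODE (x / s), ← hs_def]
  funext i
  simp only [Pi.smul_apply, Pi.sub_apply, Pi.add_apply, smul_eq_mul]
  have hs' : s ≠ 0 := hs.ne'
  field_simp
  ring
end

section
/- Let a > 0 and let (T,n,b) solve the Frenet system with curvature c ≡ a and torsion τ(x) = x/2, with orthonormal initial frame at x = 0. Then for every x ≠ 0, the vector field V(x) = T(x) + (2a/x)·b(x) satisfies V'(x) = −(2a/x²)·b(x), and hence |V(x₂) − V(x₁)| ≤ 2a·|1/x₁ − 1/x₂| for 0 < x₁ ≤ x₂. -/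
open Matrix

/-- An orthonormal frame of three vectors in ℝ³ (Euclidean inner product). -/
def IsOrthonormalFrame (T n b : Fin 3 → ℝ) : Prop :=
  T ⬝ᵥ T = 1 ∧ n ⬝ᵥ n = 1 ∧ b ⬝ᵥ b = 1 ∧
  T ⬝ᵥ n = 0 ∧ T ⬝ᵥ b = 0 ∧ n ⬝ᵥ b = 0

/-- Euclidean norm of a vector in `Fin 3 → ℝ`. -/
noncomputable def enorm3 (v : Fin 3 → ℝ) : ℝ := Real.sqrt (v ⬝ᵥ v)

/-!
A moving frame whose derivative is expressed in the frame itself by a skew-symmetric matrix `K`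
stays orthonormal: the defect `G - 1` of its Gram matrix `G` solves the linear equation
`D' = K D + D Kᵀ` (the terms `K + Kᵀ` cancel), so it vanishes by Grönwall. For the Frenet frame
this gives `|b| = 1`. Then `V = T + (2a/x) b` has `V' = a n - (2a/x²) b - (2a/x)(x/2) n =
-(2a/x²) b`, so `|V'| = 2a/x²`, the derivative of `-2a/x`, and the estimate follows by comparison.
-/

open Set Finset RealInnerProductSpace WithLp

section MovingFrame

variable {ι E : Type*} [Fintype ι] [DecidableEq ι] [NormedAddCommGroup E] [InnerProductSpace ℝ E]

noncomputable def gramDefect (v : ι → E) : ι → ι → ℝ :=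
  fun i j => ⟪v i, v j⟫ - if i = j then 1 else 0

omit [Fintype ι] in
theorem gramDefect_eq_zero_iff {v : ι → E} : gramDefect v = 0 ↔ Orthonormal ℝ v := by
  simp only [orthonormal_iff_ite, funext_iff, gramDefect, Pi.zero_apply, sub_eq_zero]

omit [DecidableEq ι] in
theorem norm_mul_add_mul_transpose_le (A D : ι → ι → ℝ) :
    ‖fun i j => ∑ k, (A i k * D k j + A j k * D i k)‖ ≤ 2 * Fintype.card ι * ‖A‖ * ‖D‖ := by
  have entry (B : ι → ι → ℝ) (i j : ι) : ‖B i j‖ ≤ ‖B‖ :=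
    (norm_le_pi_norm (B i) j).trans (norm_le_pi_norm B i)
  refine pi_norm_le_iff_of_nonneg (by positivity) |>.2 fun i => ?_
  refine pi_norm_le_iff_of_nonneg (by positivity) |>.2 fun j => ?_
  calc ‖∑ k, (A i k * D k j + A j k * D i k)‖
      ≤ ∑ k : ι, (‖A‖ * ‖D‖ + ‖A‖ * ‖D‖) := by
        refine (norm_sum_le _ _).trans (sum_le_sum fun k _ => (norm_add_le _ _).trans ?_)
        rw [norm_mul, norm_mul]
        gcongr <;> apply entry
    _ = 2 * Fintype.card ι * ‖A‖ * ‖D‖ := by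
        rw [sum_const, card_univ, nsmul_eq_mul]
        ring

variable {e : ℝ → ι → E} {K : ℝ → ι → ι → ℝ}

theorem hasDerivAt_gramDefect (hskew : ∀ x i j, K x j i = -K x i j)
    (he : ∀ x i, HasDerivAt (fun y => e y i) (∑ j, K x i j • e x j) x) (x : ℝ) :
    HasDerivAt (fun y => gramDefect (e y))
      (fun i j => ∑ k, (K x i k * gramDefect (e x) k j + K x j k * gramDefect (e x) i k)) x := by
  refine hasDerivAt_pi.2 fun i => hasDerivAt_pi.2 fun j => ?_
  refine (((he x i).inner ℝ (he x j)).sub_const _).congr_deriv ?_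
  simp only [gramDefect, sum_inner, inner_sum, real_inner_smul_left, real_inner_smul_right,
    mul_sub, sum_add_distrib, sum_sub_distrib, mul_ite, mul_one, mul_zero, sum_ite_eq,
    sum_ite_eq', Finset.mem_univ, ite_true, hskew x i j]
  ring

theorem orthonormal_of_hasDerivAt_eq_skew_sum (hK : Continuous K)
    (hskew : ∀ x i j, K x j i = -K x i j)
    (he : ∀ x i, HasDerivAt (fun y => e y i) (∑ j, K x i j • e x j) x)
    {x₀ x : ℝ} (h0 : Orthonormal ℝ (e x₀)) (hx : x₀ ≤ x) : Orthonormal ℝ (e x) := by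
  obtain ⟨M, hM⟩ := isCompact_Icc.exists_bound_of_continuousOn (s := Icc x₀ x) hK.continuousOn
  have hD := hasDerivAt_gramDefect hskew he
  refine gramDefect_eq_zero_iff.1 <| eq_zero_of_abs_deriv_le_mul_abs_self_of_eq_zero_right
    (fun y _ => (hD y).continuousAt.continuousWithinAt) (fun y _ => (hD y).hasDerivWithinAt)
    (gramDefect_eq_zero_iff.2 h0) (K := 2 * Fintype.card ι * M) (fun y hy => ?_) x ⟨hx, le_rfl⟩
  refine (norm_mul_add_mul_transpose_le _ _).trans ?_
  gcongr
  exact hM y (Ico_subset_Icc_self hy)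

end MovingFrame

theorem HasDerivAt.toLp {ι : Type*} [Fintype ι] {f : ℝ → ι → ℝ} {f' : ι → ℝ} {x : ℝ}
    (h : HasDerivAt f f' x) : HasDerivAt (fun y => toLp 2 (f y)) (toLp 2 f') x :=
  (PiLp.hasFDerivAt_toLp 2 (f x)).comp_hasDerivAt x h

theorem enorm3_eq_norm_toLp (v : Fin 3 → ℝ) : enorm3 v = ‖toLp 2 v‖ := by
  rw [enorm3, norm_eq_sqrt_real_inner, EuclideanSpace.inner_toLp_toLp, star_trivial]

theorem isOrthonormalFrame_iff_orthonormal {T n b : Fin 3 → ℝ} :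
    IsOrthonormalFrame T n b ↔ Orthonormal ℝ ![toLp 2 T, toLp 2 n, toLp 2 b] := by
  simp [orthonormal_iff_ite, Fin.forall_fin_succ, EuclideanSpace.inner_toLp_toLp,
    IsOrthonormalFrame, dotProduct_comm, -inner_self_eq_norm_sq_to_K]
  tauto

theorem isOrthonormalFrame_of_hasDerivAt_frenet {κ τ : ℝ → ℝ} (hκ : Continuous κ)
    (hτ : Continuous τ) {T n b : ℝ → Fin 3 → ℝ} (hT : ∀ x, HasDerivAt T (κ x • n x) x)
    (hn : ∀ x, HasDerivAt n (-(κ x • T x) + τ x • b x) x)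
    (hb : ∀ x, HasDerivAt b (-(τ x • n x)) x) {x₀ x : ℝ}
    (h0 : IsOrthonormalFrame (T x₀) (n x₀) (b x₀)) (hx : x₀ ≤ x) :
    IsOrthonormalFrame (T x) (n x) (b x) := by
  rw [isOrthonormalFrame_iff_orthonormal] at h0 ⊢
  refine orthonormal_of_hasDerivAt_eq_skew_sum
    (e := fun y => ![toLp 2 (T y), toLp 2 (n y), toLp 2 (b y)])
    (K := fun y => !![0, κ y, 0; -κ y, 0, τ y; 0, -τ y, 0]) ?_ ?_ ?_ h0 hx
  · fun_prop
  · intro y i j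
    fin_cases i <;> fin_cases j <;> simp
  · intro y i
    fin_cases i
    · simpa [Fin.sum_univ_three] using (hT y).toLp
    · simpa [Fin.sum_univ_three] using (hn y).toLp
    · simpa [Fin.sum_univ_three] using (hb y).toLp

theorem hasDerivAt_add_div_smul_of_frenet {F : Type*} [NormedAddCommGroup F] [NormedSpace ℝ F]
    {a x : ℝ} {T n b : ℝ → F} (hx : x ≠ 0) (hT : HasDerivAt T (a • n x) x)
    (hb : HasDerivAt b (-((x / 2) • n x)) x) :
    HasDerivAt (fun y => T y + (2 * a / y) • b y) (-((2 * a / x ^ 2) • b x)) x := by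
  have hcoeff : HasDerivAt (fun y => 2 * a / y) (-(2 * a / x ^ 2)) x := by
    simpa [div_eq_mul_inv] using (hasDerivAt_inv hx).const_mul (2 * a)
  refine (hT.add (hcoeff.smul hb)).congr_deriv ?_
  rw [smul_neg, smul_smul, show 2 * a / x * (x / 2) = a by field_simp]
  module

theorem norm_sub_le_of_norm_deriv_le_div_sq {F : Type*} [NormedAddCommGroup F]
    [NormedSpace ℝ F] {f f' : ℝ → F} {c x₁ x₂ : ℝ} (hx₁ : 0 < x₁)
    (hf : ∀ t ∈ Icc x₁ x₂, HasDerivAt f (f' t) t) (bound : ∀ t ∈ Icc x₁ x₂, ‖f' t‖ ≤ c / t ^ 2)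
    (hx : x₁ ≤ x₂) : ‖f x₂ - f x₁‖ ≤ c * (x₁⁻¹ - x₂⁻¹) := by
  have hB : ∀ t ∈ Icc x₁ x₂, HasDerivAt (fun t => c * (x₁⁻¹ - t⁻¹)) (c / t ^ 2) t := by
    intro t ht
    simpa [div_eq_mul_inv] using
      ((hasDerivAt_inv (hx₁.trans_le ht.1).ne').const_sub x₁⁻¹).const_mul c
  refine image_norm_le_of_norm_deriv_right_le_deriv_boundary' (f := fun t => f t - f x₁)
    (fun t ht => ((hf t ht).sub_const _).continuousAt.continuousWithinAt)
    (fun t ht => ((hf t (Ico_subset_Icc_self ht)).sub_const _).hasDerivWithinAt)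
    (by simp) (fun t ht => (hB t ht).continuousAt.continuousWithinAt)
    (fun t ht => (hB t (Ico_subset_Icc_self ht)).hasDerivWithinAt)
    (fun t ht => bound t (Ico_subset_Icc_self ht)) ⟨hx, le_rfl⟩

/-- for the self-similar Frenet frame, the modified field
`V = T + (2a/x) b` satisfies `V' = -(2a/x²) b`, hence a Cauchy estimate. -/
theorem selfsimilar_frenet_modified_field
    (a : ℝ) (ha : 0 < a) (T n b : ℝ → Fin 3 → ℝ)
    (hT : ∀ x : ℝ, HasDerivAt T (a • n x) x)
    (hn : ∀ x : ℝ, HasDerivAt n (-(a • T x) + (x / 2) • b x) x)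
    (hb : ∀ x : ℝ, HasDerivAt b (-((x / 2) • n x)) x)
    (h0 : IsOrthonormalFrame (T 0) (n 0) (b 0))
    (V : ℝ → Fin 3 → ℝ)
    (hV : ∀ x : ℝ, V x = T x + (2 * a / x) • b x) :
    (∀ x : ℝ, x ≠ 0 → deriv V x = -((2 * a / x ^ 2) • b x)) ∧
    (∀ x₁ x₂ : ℝ, 0 < x₁ → x₁ ≤ x₂ →
      enorm3 (V x₂ - V x₁) ≤ 2 * a * |1 / x₁ - 1 / x₂|) := by
  have hV' : ∀ x, x ≠ 0 → HasDerivAt V (-((2 * a / x ^ 2) • b x)) x := fun x hx => by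
    rw [funext hV]
    exact hasDerivAt_add_div_smul_of_frenet hx (hT x) (hb x)
  have hb_norm : ∀ t, 0 ≤ t → ‖toLp 2 (b t)‖ = 1 := fun t ht => by
    have hframe := isOrthonormalFrame_of_hasDerivAt_frenet continuous_const
      (continuous_id.div_const 2) hT hn hb h0 ht
    rw [← enorm3_eq_norm_toLp, enorm3, hframe.2.2.1, Real.sqrt_one]
  refine ⟨fun x hx => (hV' x hx).deriv, fun x₁ x₂ hx₁ hx => ?_⟩
  have hpos : ∀ t ∈ Icc x₁ x₂, 0 < t := fun t ht => hx₁.trans_le ht.1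
  rw [enorm3_eq_norm_toLp, toLp_sub, one_div, one_div]
  calc ‖toLp 2 (V x₂) - toLp 2 (V x₁)‖ ≤ 2 * a * (x₁⁻¹ - x₂⁻¹) :=
        norm_sub_le_of_norm_deriv_le_div_sq hx₁ (fun t ht => (hV' t (hpos t ht).ne').toLp)
          (fun t ht => by
            rw [toLp_neg, toLp_smul, norm_neg, norm_smul, hb_norm t (hpos t ht).le, mul_one,
              Real.norm_of_nonneg (by positivity)]) hx
    _ ≤ 2 * a * |x₁⁻¹ - x₂⁻¹| := by gcongr; exact le_abs_self _
end
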